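/- Under the Gelfand triple $V = L^2(\mu_M) \subset H = F_{1,2}^* \subset V^*$, let $A(u, \mu) := (L - \epsilon)(\Psi(u, \mu) + \lambda u)$ with $\epsilon, \lambda \in (0,1)$, where $\Psi$ satisfies: (A3) $2\int_M(\Psi(u,\mu)-\Psi(v,\nu))(u-v)\,d\mu_M \ge \alpha_1|\Psi(u,\mu)-\Psi(v,\nu)|_2^2 - \alpha_2\mathbb{W}_{2,H}(\mu,\nu)^2 - \alpha_3\|u-v\|_{H}^2$ with $\alpha_1, \alpha_2, \alpha_3 > 0$. Then there is a constant $C_{\epsilon} > 0$ such that for all $u, v \in V$ and $\mu, \nu \in \mathcal{P}_2(H)$: $2\,{}_{V^*}\langle A(u,\mu) - A(v,\nu), u - v\rangle_V \le \alpha_2\,\mathbb{W}_{2,H}(\mu,\nu)^2 + (C_{\epsilon} + \alpha_3)\|u - v\|_H^2$. -/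

import Mathlib

open MeasureTheory
open scoped RealInnerProductSpace

/-! Writing `L - ε = -(1 - L) + (1 - ε)`, the pairing of `A(u,μ) - A(v,ν)` with `u - v` is
`(1 - ε)⟪w, u - v⟫_H - ⟪w, u - v⟫₂` with `w = Ψ(u,μ) - Ψ(v,ν) + λ(u - v)`. The `L²` part is
bounded by (A3), leaving `-α₁|Ψ(u,μ) - Ψ(v,ν)|₂²`, which absorbs by Young's inequality the cross
term `|Ψ(u,μ) - Ψ(v,ν)|₂ ‖u - v‖_H` of the `H` part. -/

noncomputable def W2sq {H : Type*} [NormedAddCommGroup H] [MeasurableSpace H]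
    (μ ν : Measure H) : ℝ :=
  sInf {c : ℝ | ∃ π : Measure (H × H),
    π.map Prod.fst = μ ∧ π.map Prod.snd = ν ∧ c = ∫ p : H × H, ‖p.1 - p.2‖ ^ 2 ∂π}

lemma two_mul_le_mul_sq_add_sq_div {α x y : ℝ} (hα : 0 < α) :
    2 * x * y ≤ α * x ^ 2 + y ^ 2 / α := by
  have hsq : α * x ^ 2 + y ^ 2 / α - 2 * x * y = (α * x - y) ^ 2 / α := by
    field_simp
    ring
  have : 0 ≤ (α * x - y) ^ 2 / α := by positivity
  linarith

section GelfandTriple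

variable {V H : Type*} [NormedAddCommGroup V] [InnerProductSpace ℝ V]
  [NormedAddCommGroup H] [InnerProductSpace ℝ H]

lemma two_mul_inner_map_le {α c : ℝ} (hα : 0 < α) (hc : 0 ≤ c) (J : V →L[ℝ] H)
    (a d : V) :
    2 * c * ⟪J a, J d⟫ ≤ α * ‖a‖ ^ 2 + (c * ‖J‖) ^ 2 / α * ‖J d‖ ^ 2 :=
  calc 2 * c * ⟪J a, J d⟫ ≤ 2 * c * (‖J‖ * ‖a‖ * ‖J d‖) := by
        gcongr
        exact (real_inner_le_norm _ _).trans
          (mul_le_mul_of_nonneg_right (J.le_opNorm a) (norm_nonneg _))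
    _ = 2 * ‖a‖ * (c * ‖J‖ * ‖J d‖) := by ring
    _ ≤ α * ‖a‖ ^ 2 + (c * ‖J‖ * ‖J d‖) ^ 2 / α := two_mul_le_mul_sq_add_sq_div hα
    _ = α * ‖a‖ ^ 2 + (c * ‖J‖) ^ 2 / α * ‖J d‖ ^ 2 := by ring

lemma pairing_sub_eq_inner {J : V →L[ℝ] H} {T : V →L[ℝ] StrongDual ℝ V}
    (hT : ∀ u v : V, T u v = ⟪u, v⟫) {ι : H →L[ℝ] StrongDual ℝ V}
    (hι : ∀ (h : H) (v : V), ι h v = ⟪h, J v⟫) (c lam : ℝ) (p q u v : V) :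
    ((c • ι (J (p + lam • u)) - T (p + lam • u)) -
        (c • ι (J (q + lam • v)) - T (q + lam • v))) (u - v) =
      c * (⟪J (p - q), J (u - v)⟫ + lam * ‖J (u - v)‖ ^ 2) -
        (⟪p - q, u - v⟫ + lam * ‖u - v‖ ^ 2) := by
  have hw : p + lam • u - (q + lam • v) = (p - q) + lam • (u - v) := by module
  calc _ = c * ⟪J (p + lam • u - (q + lam • v)), J (u - v)⟫ -
        ⟪p + lam • u - (q + lam • v), u - v⟫ := by
        simp only [sub_apply, smul_apply, smul_eq_mul, hι, hT, map_sub, inner_sub_left,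
          inner_sub_right]
        ring
    _ = _ := by
        rw [hw, map_add, map_smul, inner_add_left, inner_add_left, real_inner_smul_left,
          real_inner_smul_left, real_inner_self_eq_norm_sq, real_inner_self_eq_norm_sq]

end GelfandTriple

theorem stmt15_general
    (V H : Type*)
    [NormedAddCommGroup V] [InnerProductSpace ℝ V]
    [NormedAddCommGroup H] [InnerProductSpace ℝ H]
    [MeasurableSpace H]
    (J : V →L[ℝ] H)
    (T : V →L[ℝ] StrongDual ℝ V)
    (hT : ∀ u v : V, T u v = ⟪u, v⟫)
    (ι : H →L[ℝ] StrongDual ℝ V)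
    (hι : ∀ (h : H) (v : V), ι h v = ⟪h, J v⟫)
    (ε lam α1 α2 α3 : ℝ) (hε : ε ∈ Set.Ioo (0 : ℝ) 1) (hlam : lam ∈ Set.Ioo (0 : ℝ) 1)
    (hα1 : 0 < α1)
    (Ψ : V → Measure H → V)
    (hA3 : ∀ (u v : V) (μ ν : Measure H),
      IsProbabilityMeasure μ → IsProbabilityMeasure ν →
      Integrable (fun z => ‖z‖ ^ 2) μ → Integrable (fun z => ‖z‖ ^ 2) ν →
      2 * ⟪Ψ u μ - Ψ v ν, u - v⟫ ≥
        α1 * ‖Ψ u μ - Ψ v ν‖ ^ 2 - α2 * W2sq μ ν - α3 * ‖J u - J v‖ ^ 2) :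
    ∃ C > (0 : ℝ), ∀ (u v : V) (μ ν : Measure H),
      IsProbabilityMeasure μ → IsProbabilityMeasure ν →
      Integrable (fun z => ‖z‖ ^ 2) μ → Integrable (fun z => ‖z‖ ^ 2) ν →
      2 * ((((1 - ε) • ι (J (Ψ u μ + lam • u)) - T (Ψ u μ + lam • u)) -
            ((1 - ε) • ι (J (Ψ v ν + lam • v)) - T (Ψ v ν + lam • v))) (u - v)) ≤
        α2 * W2sq μ ν + (C + α3) * ‖J u - J v‖ ^ 2 := by
  have hc : 0 < 1 - ε := sub_pos.mpr hε.2
  have hlam0 : 0 < lam := hlam.1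
  -- Young's constant for the cross term, plus the coefficient of `λ‖u - v‖_H²`.
  refine ⟨((1 - ε) * ‖J‖) ^ 2 / α1 + 2 * (1 - ε) * lam, by positivity, ?_⟩
  intro u v μ ν hμ hν hiμ hiν
  have hcross := two_mul_inner_map_le hα1 hc.le J (Ψ u μ - Ψ v ν) (u - v)
  have hA := hA3 u v μ ν hμ hν hiμ hiν
  have hd : 0 ≤ lam * ‖u - v‖ ^ 2 := mul_nonneg hlam0.le (sq_nonneg _)
  rw [pairing_sub_eq_inner hT hι, ← map_sub J u v]
  rw [← map_sub J u v] at hA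
  linarith

/-- Monotonicity estimate for `A(u,μ) := (L-ε)(Ψ(u,μ) + λu)` in the
Gelfand triple `V = L²(μ_M) ⊂ H = F_{1,2}^* ⊂ V^*`: under assumption (A3),
`2⟨(Ψ(u,μ)-Ψ(v,ν)), u-v⟩₂ ≥ α₁|Ψ(u,μ)-Ψ(v,ν)|₂² - α₂ W(μ,ν)² - α₃‖u-v‖_H²`,
there is `C_ε > 0` such that
`2 ⟨A(u,μ) - A(v,ν), u - v⟩_{V^*,V} ≤ α₂ W(μ,ν)² + (C_ε + α₃)‖u - v‖_H²`.
Here `(L-ε) = -(1-L) + (1-ε)` with `T = (1-L) : V → V^*` satisfying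
`T u v = ⟨u,v⟩₂`, `ι : H ⊂ V^*` the embedding with `ι h v = ⟨h, J v⟩_H`, and
`J : V ⊂ H` the continuous embedding. -/
theorem stmt15
    (V H : Type*)
    [NormedAddCommGroup V] [InnerProductSpace ℝ V] [CompleteSpace V]
    [NormedAddCommGroup H] [InnerProductSpace ℝ H] [CompleteSpace H]
    [MeasurableSpace H] [BorelSpace H]
    (J : V →L[ℝ] H)
    (T : V →L[ℝ] StrongDual ℝ V)
    (hT : ∀ u v : V, T u v = ⟪u, v⟫)
    (ι : H →L[ℝ] StrongDual ℝ V)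
    (hι : ∀ (h : H) (v : V), ι h v = ⟪h, J v⟫)
    (ε lam α1 α2 α3 : ℝ) (hε : ε ∈ Set.Ioo (0 : ℝ) 1) (hlam : lam ∈ Set.Ioo (0 : ℝ) 1)
    (hα1 : 0 < α1) (hα2 : 0 < α2) (hα3 : 0 < α3)
    (Ψ : V → Measure H → V)
    (hA3 : ∀ (u v : V) (μ ν : Measure H),
      IsProbabilityMeasure μ → IsProbabilityMeasure ν →
      Integrable (fun z => ‖z‖ ^ 2) μ → Integrable (fun z => ‖z‖ ^ 2) ν →
      2 * ⟪Ψ u μ - Ψ v ν, u - v⟫ ≥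
        α1 * ‖Ψ u μ - Ψ v ν‖ ^ 2 - α2 * W2sq μ ν - α3 * ‖J u - J v‖ ^ 2) :
    ∃ C > (0 : ℝ), ∀ (u v : V) (μ ν : Measure H),
      IsProbabilityMeasure μ → IsProbabilityMeasure ν →
      Integrable (fun z => ‖z‖ ^ 2) μ → Integrable (fun z => ‖z‖ ^ 2) ν →
      2 * ((((1 - ε) • ι (J (Ψ u μ + lam • u)) - T (Ψ u μ + lam • u)) -
            ((1 - ε) • ι (J (Ψ v ν + lam • v)) - T (Ψ v ν + lam • v))) (u - v)) ≤
        α2 * W2sq μ ν + (C + α3) * ‖J u - J v‖ ^ 2 :=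
  stmt15_general V H J T hT ι hι ε lam α1 α2 α3 hε hlam hα1 Ψ hA3
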